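/- Let ⟨·,·⟩ be an antisymmetric bilinear form on ℤⁿ with radical C = {z : ⟨z,·⟩ = 0}. Fix distinct elements c₁, …, c_k ∈ C and nonzero rationals q₁, …, q_k, and define f(x) = Σᵢ qᵢ·(cᵢ + x) ∈ ℚ[ℤⁿ] for x ∈ ℤⁿ. Then for every y ∈ ℤⁿ, [f(x), y] = ⟨x,y⟩·f(x+y) in ℚ[ℤⁿ] (bracket [w,v] = ⟨w,v⟩·(w+v)), and consequently the ℚ-span of {f(x) : x ∈ ℤⁿ \ C} is a Lie ideal of ℚ[ℤⁿ]. -/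

import Mathlib

/-- The bracket on the free `ℚ`-module on `ℤⁿ` defined on basis elements by
`[w, v] = ⟨w, v⟩ • (w + v)` and extended `ℚ`-bilinearly. -/
noncomputable def brQ {n : ℕ} (B : (Fin n → ℤ) → (Fin n → ℤ) → ℤ)
    (x y : (Fin n → ℤ) →₀ ℚ) : (Fin n → ℤ) →₀ ℚ :=
  x.sum fun w a => y.sum fun v b => Finsupp.single (w + v) (a * b * (B w v : ℚ))

/-! Translating by an element of the radical does not change `⟨·, y⟩`, so the bracket of `f(x)`
with a basis element `y` is computed term by term: `[cᵢ + x, y] = ⟨x, y⟩ (cᵢ + x + y)`.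
If `⟨x, y⟩ ≠ 0` then `x + y ∉ C`, since `⟨x + y, y⟩ = ⟨x, y⟩` by antisymmetry; so the bracket of a
generator with a basis element stays in the span, and bilinearity does the rest. -/

open Finsupp Submodule

section Bracket

variable {n : ℕ} (B : (Fin n → ℤ) → (Fin n → ℤ) → ℤ)

lemma brQ_single_single (w v : Fin n → ℤ) (a b : ℚ) :
    brQ B (single w a) (single v b) = single (w + v) (a * b * (B w v : ℚ)) := by
  simp [brQ]

lemma brQ_add_left (x x' y : (Fin n → ℤ) →₀ ℚ) :
    brQ B (x + x') y = brQ B x y + brQ B x' y := by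
  refine sum_add_index' (by simp) fun w a a' => ?_
  rw [← sum_add]
  exact sum_congr fun v _ => by rw [← single_add, add_mul, add_mul]

lemma brQ_smul_left (r : ℚ) (x y : (Fin n → ℤ) →₀ ℚ) :
    brQ B (r • x) y = r • brQ B x y := by
  rw [brQ, brQ, sum_smul_index (by simp), smul_sum]
  refine sum_congr fun w _ => ?_
  rw [smul_sum]
  exact sum_congr fun v _ => by rw [smul_single, smul_eq_mul, mul_assoc, mul_assoc, mul_assoc]

lemma brQ_add_right (x y y' : (Fin n → ℤ) →₀ ℚ) :
    brQ B x (y + y') = brQ B x y + brQ B x y' := by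
  rw [brQ, brQ, brQ, ← sum_add]
  refine sum_congr fun w _ => sum_add_index' (by simp) fun v b b' => ?_
  rw [← single_add, mul_add, add_mul]

lemma brQ_smul_right (r : ℚ) (x y : (Fin n → ℤ) →₀ ℚ) :
    brQ B x (r • y) = r • brQ B x y := by
  rw [brQ, brQ, smul_sum]
  refine sum_congr fun w _ => ?_
  rw [sum_smul_index (by simp), smul_sum]
  exact sum_congr fun v _ => by rw [smul_single, smul_eq_mul]; ring_nf

noncomputable def brQₗ :
    ((Fin n → ℤ) →₀ ℚ) →ₗ[ℚ] ((Fin n → ℤ) →₀ ℚ) →ₗ[ℚ] (Fin n → ℤ) →₀ ℚ :=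
  LinearMap.mk₂ ℚ (brQ B) (brQ_add_left B) (brQ_smul_left B) (brQ_add_right B)
    (brQ_smul_right B)

lemma brQ_mem_span_of_forall_single {S : Set ((Fin n → ℤ) →₀ ℚ)}
    (hS : ∀ v ∈ S, ∀ y, brQ B v (single y 1) ∈ span ℚ S)
    {z : (Fin n → ℤ) →₀ ℚ} (hz : z ∈ span ℚ S) (u : (Fin n → ℤ) →₀ ℚ) :
    brQ B z u ∈ span ℚ S := by
  have hgen : ∀ v ∈ S, brQₗ B v u ∈ span ℚ S := fun v hv => by
    induction u using Finsupp.induction_linear with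
    | zero => simp
    | add u u' hu hu' => rw [map_add]; exact add_mem hu hu'
    | single y b => rw [← smul_single_one, map_smul]; exact smul_mem _ _ (hS v hv y)
  exact (span_le (p := (span ℚ S).comap ((brQₗ B).flip u))).2 hgen hz

end Bracket

lemma brQ_sum_single_add_radical {ι : Type*} [Fintype ι] {n : ℕ}
    (B : (Fin n → ℤ) →ₗ[ℤ] (Fin n → ℤ) →ₗ[ℤ] ℤ) {c : ι → Fin n → ℤ}
    (hc : ∀ i y, B (c i) y = 0) (q : ι → ℚ) (x y : Fin n → ℤ) :
    brQ (fun a b => B a b) (∑ i, single (c i + x) (q i)) (single y 1)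
      = (B x y : ℚ) • ∑ i, single (c i + (x + y)) (q i) := by
  change brQₗ _ _ _ = _
  rw [map_sum, LinearMap.sum_apply, Finset.smul_sum]
  refine Finset.sum_congr rfl fun i _ => ?_
  have hshift : B (c i + x) y = B x y := by rw [map_add, LinearMap.add_apply, hc, zero_add]
  rw [brQₗ, LinearMap.mk₂_apply, brQ_single_single, hshift, smul_single, add_assoc, smul_eq_mul,
    mul_one, mul_comm]

lemma apply_add_self_of_antisymm {M : Type*} [AddCommGroup M] (B : M →ₗ[ℤ] M →ₗ[ℤ] ℤ)
    (hB : ∀ x y, B x y = - B y x) (x y : M) : B (x + y) y = B x y := by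
  have hyy : B y y = 0 := by linarith [hB y y]
  rw [map_add, LinearMap.add_apply, hyy, add_zero]

theorem stmt8_general (n k : ℕ) (B : (Fin n → ℤ) →ₗ[ℤ] (Fin n → ℤ) →ₗ[ℤ] ℤ)
    (hB : ∀ x y, B x y = - B y x)
    (c : Fin k → (Fin n → ℤ)) (hc : ∀ i, ∀ y, B (c i) y = 0)
    (q : Fin k → ℚ) :
    (∀ x y : Fin n → ℤ,
      brQ (fun a b => B a b) (∑ i, Finsupp.single (c i + x) (q i)) (Finsupp.single y (1 : ℚ))
        = (B x y : ℚ) • ∑ i, Finsupp.single (c i + (x + y)) (q i)) ∧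
    (∀ z ∈ Submodule.span ℚ
        {v | ∃ x : Fin n → ℤ, (¬ ∀ y, B x y = 0) ∧ v = ∑ i, Finsupp.single (c i + x) (q i)},
      ∀ u, brQ (fun a b => B a b) z u ∈ Submodule.span ℚ
        {v | ∃ x : Fin n → ℤ, (¬ ∀ y, B x y = 0) ∧ v = ∑ i, Finsupp.single (c i + x) (q i)}) := by
  refine ⟨brQ_sum_single_add_radical B hc q, fun z hz => brQ_mem_span_of_forall_single _ ?_ hz⟩
  rintro _ ⟨x, -, rfl⟩ y
  rw [brQ_sum_single_add_radical B hc]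
  by_cases hxy : B x y = 0
  · simp [hxy]
  · have hxy_nonradical : ¬ ∀ z, B (x + y) z = 0 := fun h =>
      hxy (apply_add_self_of_antisymm B hB x y ▸ h y)
    exact smul_mem _ _ (subset_span ⟨x + y, hxy_nonradical, rfl⟩)

theorem stmt8 (n k : ℕ) (B : (Fin n → ℤ) →ₗ[ℤ] (Fin n → ℤ) →ₗ[ℤ] ℤ)
    (hB : ∀ x y, B x y = - B y x)
    (c : Fin k → (Fin n → ℤ)) (hc : ∀ i, ∀ y, B (c i) y = 0)
    (hcinj : Function.Injective c)
    (q : Fin k → ℚ) (hq : ∀ i, q i ≠ 0) :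
    (∀ x y : Fin n → ℤ,
      brQ (fun a b => B a b) (∑ i, Finsupp.single (c i + x) (q i)) (Finsupp.single y (1 : ℚ))
        = (B x y : ℚ) • ∑ i, Finsupp.single (c i + (x + y)) (q i)) ∧
    (∀ z ∈ Submodule.span ℚ
        {v | ∃ x : Fin n → ℤ, (¬ ∀ y, B x y = 0) ∧ v = ∑ i, Finsupp.single (c i + x) (q i)},
      ∀ u, brQ (fun a b => B a b) z u ∈ Submodule.span ℚ
        {v | ∃ x : Fin n → ℤ, (¬ ∀ y, B x y = 0) ∧ v = ∑ i, Finsupp.single (c i + x) (q i)}) :=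
  stmt8_general n k B hB c hc q
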